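/- arXiv:1812.02277 — 5 statements merged into one kernel-verified Lean document; each statement's English description precedes it below -/
import Mathlib

section
/- Let X be a free ℤ-module of finite rank, B : X × X → ℚ a symmetric ℤ-bilinear form, and α_1, …, α_n ∈ X a finite list of elements such that: (i) for every x ∈ X, if B(α_j, x) = 0 for all j = 1, …, n then x = 0; and (ii) for each j = 1, …, n the set S_j = { x ∈ X : B(α_i, x) = 0 for all i < j, and B(α_j, x) > 0 } is nonempty. Then the set of dominant elements X⁺ = { x ∈ X : B(α_j, x) ≥ 0 for all j = 1, …, n } generates X as a ℤ-module (i.e. every element of X is a ℤ-linear combination of dominant elements). -/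
/-!
Adding a large multiple of a witness `z` for index `j` (zero on the earlier `α i`, positive on
`α j`) makes the pairing with `α j` nonnegative without touching the earlier ones, so going
through the indices in increasing order makes any `x` dominant. By downward induction on `j`
this turns a witness for `j` into a dominant one (adding only witnesses for later indices, which
vanish on `α i`, `i ≤ j`). Applied to an arbitrary `x` with dominant witnesses, it gives a
dominant `x + y` with `y` a sum of dominant elements, and `x = (x + y) - y`.
-/

section

variable {ι X M : Type*} [LinearOrder ι] [AddCommMonoid X]
  [AddCommGroup M] [LinearOrder M] [IsOrderedAddMonoid M] [Archimedean M]

theorem exists_mem_forall_mem_nonneg_add (f : ι → X →+ M) (S : AddSubmonoid X) (x : X)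
    (s : Finset ι) (hs : ∀ j ∈ s, ∃ z ∈ S, (∀ i < j, f i z = 0) ∧ 0 < f j z) :
    ∃ y ∈ S, ∀ i ∈ s, 0 ≤ f i (x + y) := by
  classical
  induction s using Finset.induction_on_max with
  | empty => exact ⟨0, S.zero_mem, by simp⟩
  | insert j s hlt ih =>
    obtain ⟨y, hyS, hy⟩ := ih fun i hi ↦ hs i (Finset.mem_insert_of_mem hi)
    obtain ⟨z, hzS, hz0, hzpos⟩ := hs j (Finset.mem_insert_self j s)
    obtain ⟨c, hc⟩ := Archimedean.arch (-f j (x + y)) hzpos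
    refine ⟨y + c • z, S.add_mem hyS (S.nsmul_mem hzS c), ?_⟩
    have hadd : ∀ i, f i (x + (y + c • z)) = f i (x + y) + c • f i z := fun i ↦ by
      rw [← add_assoc, map_add, map_nsmul]
    intro i hi
    rcases Finset.mem_insert.mp hi with rfl | hi
    · exact (hadd i).symm ▸ neg_le_iff_add_nonneg'.mp hc
    · rw [hadd, hz0 i (hlt i hi), smul_zero, add_zero]
      exact hy i hi

theorem exists_forall_nonneg_of_exists_pos [Finite ι] (f : ι → X →+ M)
    (h : ∀ j, ∃ z, (∀ i < j, f i z = 0) ∧ 0 < f j z) (j : ι) :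
    ∃ z, ((∀ i < j, f i z = 0) ∧ 0 < f j z) ∧ ∀ i, 0 ≤ f i z := by
  have := Fintype.ofFinite ι
  induction j using WellFoundedGT.induction with
  | _ j ih =>
  let S : AddSubmonoid X := ⨅ (i) (_ : i ≤ j), AddMonoidHom.mker (f i)
  obtain ⟨x, hx0, hxpos⟩ := h j
  obtain ⟨y, hyS, hy⟩ := exists_mem_forall_mem_nonneg_add f S x {k | j < k} fun k hk ↦ by
    obtain ⟨z, ⟨hz0, hzpos⟩, -⟩ := ih k (Finset.mem_filter.mp hk).2
    refine ⟨z, ?_, hz0, hzpos⟩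
    simp only [S, AddSubmonoid.mem_iInf, AddMonoidHom.mem_mker]
    exact fun i hij ↦ hz0 i (hij.trans_lt (Finset.mem_filter.mp hk).2)
  have hfix : ∀ i ≤ j, f i (x + y) = f i x := fun i hij ↦ by
    simp only [S, AddSubmonoid.mem_iInf, AddMonoidHom.mem_mker] at hyS
    rw [map_add, hyS i hij, add_zero]
  refine ⟨x + y, ⟨fun i hij ↦ (hfix i hij.le).trans (hx0 i hij), (hfix j le_rfl) ▸ hxpos⟩, ?_⟩
  intro i
  rcases le_or_gt i j with hij | hij
  · rw [hfix i hij]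
    rcases hij.lt_or_eq with hij | rfl
    · exact (hx0 i hij).ge
    · exact hxpos.le
  · exact hy i (by simpa using hij)

end

theorem AddSubgroup.closure_setOf_forall_nonneg_eq_top {ι X M : Type*} [LinearOrder ι] [Finite ι]
    [AddCommGroup X] [AddCommGroup M] [LinearOrder M] [IsOrderedAddMonoid M] [Archimedean M]
    (f : ι → X →+ M) (h : ∀ j, ∃ z, (∀ i < j, f i z = 0) ∧ 0 < f j z) :
    AddSubgroup.closure {z | ∀ i, 0 ≤ f i z} = ⊤ := by
  have := Fintype.ofFinite ι
  let G := AddSubgroup.closure {z | ∀ i, 0 ≤ f i z}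
  refine eq_top_iff.mpr fun x _ ↦ ?_
  obtain ⟨y, hyG, hy⟩ := exists_mem_forall_mem_nonneg_add f G.toAddSubmonoid x Finset.univ
    fun j _ ↦
      let ⟨z, hz, hzdom⟩ := exists_forall_nonneg_of_exists_pos f h j
      ⟨z, AddSubgroup.subset_closure hzdom, hz⟩
  have hxy : x + y ∈ G := AddSubgroup.subset_closure fun i ↦ hy i (Finset.mem_univ i)
  simpa using G.sub_mem hxy hyG

theorem dominant_weights_span_general
    (X : Type*) [AddCommGroup X] [Module ℤ X]
    (n : ℕ) (B : X →ₗ[ℤ] X →ₗ[ℤ] ℚ)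
    (α : Fin n → X)
    (hS : ∀ j : Fin n, ∃ x : X, (∀ i : Fin n, i < j → B (α i) x = 0) ∧ 0 < B (α j) x) :
    Submodule.span ℤ {x : X | ∀ j : Fin n, 0 ≤ B (α j) x} = ⊤ := by
  have hclosure := AddSubgroup.closure_setOf_forall_nonneg_eq_top
    (fun j ↦ (B (α j)).toAddMonoidHom) hS
  rw [← Submodule.toAddSubgroup_eq_top, eq_top_iff, ← hclosure, AddSubgroup.closure_le]
  exact Submodule.subset_span

/-- Dominant elements span the lattice: if `X` is a finite-rank free `ℤ`-module,
`B` a symmetric `ℤ`-bilinear `ℚ`-valued form, and `α 0, …, α (n-1)` elements such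
that (i) only `0` pairs to zero with every `α j`, and (ii) for each `j` there is an
element orthogonal to all earlier `α i` and pairing positively with `α j`, then the
set of dominant elements `{x | ∀ j, 0 ≤ B (α j) x}` generates `X` over `ℤ`. -/
theorem dominant_weights_span
    (X : Type*) [AddCommGroup X] [Module ℤ X] [Module.Free ℤ X] [Module.Finite ℤ X]
    (n : ℕ) (B : X →ₗ[ℤ] X →ₗ[ℤ] ℚ)
    (hsymm : ∀ x y : X, B x y = B y x)
    (α : Fin n → X)
    (hnondeg : ∀ x : X, (∀ j : Fin n, B (α j) x = 0) → x = 0)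
    (hS : ∀ j : Fin n, ∃ x : X, (∀ i : Fin n, i < j → B (α i) x = 0) ∧ 0 < B (α j) x) :
    Submodule.span ℤ {x : X | ∀ j : Fin n, 0 ≤ B (α j) x} = ⊤ :=
  dominant_weights_span_general X n B α hS
end

section
/- Let X be an abelian group, M ⊆ X a subgroup, and β : X × X → ℂˣ a map multiplicative in each argument (ℤ-bilinear into the multiplicative group of ℂ) such that β(x, x′) = 1 for all x, x′ ∈ M. Then there exists a balancing function ω : X × X → ℂˣ, i.e. a map satisfying: (a) ω(a + a′, b) = ω(a, b)·ω(a′, b) for all a, a′, b ∈ X; (b) ω(a, b + x) = β(a, x)·ω(a, b) for all a, b ∈ X and x ∈ M; (c) ω(x, b) = 1 for all x ∈ M and b ∈ X. -/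
namespace QuotientAddGroup

variable {X : Type*} [AddCommGroup X] {M : AddSubgroup X}

theorem sub_out_mk_mem (b : X) : b - (b : X ⧸ M).out ∈ M := by
  have h : ((b : X ⧸ M).out : X ⧸ M) = b := out_eq' _
  rw [QuotientAddGroup.eq] at h
  simpa [sub_eq_neg_add] using h

theorem out_mk_add_of_mem {b x : X} (hx : x ∈ M) :
    ((b + x : X) : X ⧸ M).out = (b : X ⧸ M).out := by
  rw [mk_add, (eq_zero_iff x).mpr hx, add_zero]

end QuotientAddGroup

section BalancingFunction

variable {X G : Type*} [AddCommGroup X] [Monoid G] (M : AddSubgroup X) (β : X → X → G)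

/-- The paper's `ω(a, x + s(z)) = β(a, x)` for `x ∈ M`, with the section `s = Quotient.out`
of `X → X ⧸ M`. -/
noncomputable def balancingFunction (a b : X) : G :=
  β a (b - (b : X ⧸ M).out)

variable {M β}

theorem balancingFunction_add_left (hβ : ∀ a a' b : X, β (a + a') b = β a b * β a' b)
    (a a' b : X) :
    balancingFunction M β (a + a') b = balancingFunction M β a b * balancingFunction M β a' b :=
  hβ a a' _

theorem balancingFunction_add_right_of_mem (hβ : ∀ a b b' : X, β a (b + b') = β a b * β a b')
    (a b : X) {x : X} (hx : x ∈ M) :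
    balancingFunction M β a (b + x) = β a x * balancingFunction M β a b := by
  rw [balancingFunction, balancingFunction, QuotientAddGroup.out_mk_add_of_mem hx,
    show b + x - (b : X ⧸ M).out = x + (b - (b : X ⧸ M).out) by abel, hβ]

theorem balancingFunction_of_mem_left (hβM : ∀ x ∈ M, ∀ x' ∈ M, β x x' = 1)
    {x : X} (hx : x ∈ M) (b : X) : balancingFunction M β x b = 1 :=
  hβM x hx _ (QuotientAddGroup.sub_out_mk_mem b)

end BalancingFunction

/-- Every strongly admissible lattice admits a balancing function: given an abelian
group `X`, a subgroup `M`, and a bilinear map `β : X × X → ℂˣ` which is trivial on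
`M × M`, there exists `ω : X × X → ℂˣ` which is (a) linear in its first argument,
(b) `M`-semilinear (via `β`) in its second argument, and (c) trivial on `M × X`. -/
theorem exists_balancing_function
    (X : Type*) [AddCommGroup X] (M : AddSubgroup X)
    (β : X → X → ℂˣ)
    (hβ1 : ∀ a a' b : X, β (a + a') b = β a b * β a' b)
    (hβ2 : ∀ a b b' : X, β a (b + b') = β a b * β a b')
    (hβM : ∀ x ∈ M, ∀ x' ∈ M, β x x' = 1) :
    ∃ ω : X → X → ℂˣ,
      (∀ a a' b : X, ω (a + a') b = ω a b * ω a' b) ∧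
      (∀ a b : X, ∀ x ∈ M, ω a (b + x) = β a x * ω a b) ∧
      (∀ x ∈ M, ∀ b : X, ω x b = 1) :=
  ⟨balancingFunction M β, balancingFunction_add_left hβ1,
    fun a b _ hx => balancingFunction_add_right_of_mem hβ2 a b hx,
    fun _ hx b => balancingFunction_of_mem_left hβM hx b⟩
end

section
/- Let ω be a balancing function for (X, M, β), and define b : X → ℂˣ by b(a) = ω(a, a)⁻¹ · ω(a, −a)⁻¹. Then b is constant on M-cosets: for all a ∈ X and x ∈ M, b(a + x) = b(a). In particular b descends to a function on X/M. -/
/-! Since `ω` is additive in its first argument and trivial on `M` there, `ω (a + x) = ω a`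
for `x ∈ M`. Shifting the second argument by `x` multiplies `ω a` by `β a x`, so the product
`ω a b * ω a c` is unchanged when `b` moves by `+x` and `c` by `-x`; apply this to `b = a`,
`c = -a`. -/

section Balancing

variable {X G : Type*} [AddCommGroup X] [CommGroup G] {M : AddSubgroup X} {β ω : X → X → G}

theorem apply_add_left_of_mem
    (ha : ∀ a a' b : X, ω (a + a') b = ω a b * ω a' b) (hc : ∀ x ∈ M, ∀ b : X, ω x b = 1)
    (a b : X) {x : X} (hx : x ∈ M) : ω (a + x) b = ω a b := by
  rw [ha, hc x hx, mul_one]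

theorem mul_apply_add_sub_right_of_mem
    (hb : ∀ a b : X, ∀ x ∈ M, ω a (b + x) = β a x * ω a b)
    (a b c : X) {x : X} (hx : x ∈ M) : ω a (b + x) * ω a (c - x) = ω a b * ω a c := by
  have hc : ω a c = β a x * ω a (c - x) := by
    rw [← hb a (c - x) x hx, sub_add_cancel]
  rw [hb a b x hx, hc, mul_assoc, mul_left_comm]

end Balancing

theorem antipode_element_M_invariant_general
    (X : Type*) [AddCommGroup X] (M : AddSubgroup X)
    (β ω : X → X → ℂˣ)
    (ha : ∀ a a' b : X, ω (a + a') b = ω a b * ω a' b)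
    (hb : ∀ a b : X, ∀ x ∈ M, ω a (b + x) = β a x * ω a b)
    (hc : ∀ x ∈ M, ∀ b : X, ω x b = 1) :
    ∀ a : X, ∀ x ∈ M,
      (ω (a + x) (a + x))⁻¹ * (ω (a + x) (-(a + x)))⁻¹
        = (ω a a)⁻¹ * (ω a (-a))⁻¹ := by
  intro a x hx
  rw [← mul_inv, ← mul_inv, apply_add_left_of_mem ha hc a _ hx,
    apply_add_left_of_mem ha hc a _ hx, neg_add, ← sub_eq_add_neg,
    mul_apply_add_sub_right_of_mem hb a a (-a) hx]

/-- The function `b(a) = ω(a,a)⁻¹·ω(a,−a)⁻¹` built from a balancing function `ω`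
for `(X, M, β)` is constant on `M`-cosets, hence descends to a function on `X/M`. -/
theorem antipode_element_M_invariant
    (X : Type*) [AddCommGroup X] (M : AddSubgroup X)
    (β ω : X → X → ℂˣ)
    (hβ1 : ∀ a a' b : X, β (a + a') b = β a b * β a' b)
    (hβ2 : ∀ a b b' : X, β a (b + b') = β a b * β a b')
    (ha : ∀ a a' b : X, ω (a + a') b = ω a b * ω a' b)
    (hb : ∀ a b : X, ∀ x ∈ M, ω a (b + x) = β a x * ω a b)
    (hc : ∀ x ∈ M, ∀ b : X, ω x b = 1) :
    ∀ a : X, ∀ x ∈ M,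
      (ω (a + x) (a + x))⁻¹ * (ω (a + x) (-(a + x)))⁻¹
        = (ω a a)⁻¹ * (ω a (-a))⁻¹ :=
  antipode_element_M_invariant_general X M β ω ha hb hc
end

section
/- Let ω be a balancing function for (X, M, β), and assume additionally that β is symmetric (β(a,b) = β(b,a) for all a, b ∈ X) and that β(a, x)² = 1 for all a ∈ X and x ∈ M. Then for each fixed γ ∈ X, both functions g, h : X → ℂˣ defined by g(λ) = β(λ, γ) · ω(λ, λ) · ω(λ − γ, λ − γ) and h(λ) = β(λ, γ)⁻¹ · ω(λ, λ) · ω(λ + γ, λ + γ)⁻¹ are constant on M-cosets: g(λ + x) = g(λ) and h(λ + x) = h(λ) for all λ ∈ X and x ∈ M. -/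
/-!
For `x ∈ M`, conditions (a)–(c) give `ω(λ+x, λ+x) = ω(λ, λ+x) = β(λ,x)·ω(λ,λ)`, so each diagonal
factor of `g` and `h` picks up a sign `β(·,x)` under `λ ↦ λ+x`, and the factor `β(λ,γ)^{±1}` picks up
`β(x,γ)^{±1} = β(γ,x)^{±1}`. By additivity of `β` in the first argument these corrections multiply
to `β(λ,x)²` for `g` and to `β(γ,x)⁻²` for `h`, both equal to `1`.
-/

section

variable {X G : Type*} [AddCommGroup X] [CommGroup G]

structure IsBalancing (M : AddSubgroup X) (β ω : X → X → G) : Prop where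
  map_add_left : ∀ a a' b : X, ω (a + a') b = ω a b * ω a' b
  map_add_right_mem : ∀ a b : X, ∀ x ∈ M, ω a (b + x) = β a x * ω a b
  map_mem_left : ∀ x ∈ M, ∀ b : X, ω x b = 1

/-- The coefficient `g` of the twisted antipode on `𝖤_γ`. -/
def antipodeCoeffE (β ω : X → X → G) (γ lam : X) : G :=
  β lam γ * ω lam lam * ω (lam - γ) (lam - γ)

/-- The coefficient `h` of the twisted antipode on `F_γ`. -/
def antipodeCoeffF (β ω : X → X → G) (γ lam : X) : G :=
  (β lam γ)⁻¹ * ω lam lam * (ω (lam + γ) (lam + γ))⁻¹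

namespace IsBalancing

variable {M : AddSubgroup X} {β ω : X → X → G}

theorem diag_add_mem (hω : IsBalancing M β ω) (a : X) {x : X} (hx : x ∈ M) :
    ω (a + x) (a + x) = β a x * ω a a := by
  rw [hω.map_add_left, hω.map_mem_left x hx, mul_one, hω.map_add_right_mem a a x hx]

section

variable (hω : IsBalancing M β ω) (hβ_add : ∀ a a' b : X, β (a + a') b = β a b * β a' b)
  (hβ_symm : ∀ a b : X, β a b = β b a) (hβ_sq : ∀ a : X, ∀ x ∈ M, β a x ^ 2 = 1)
include hω hβ_add hβ_symm hβ_sq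

theorem antipodeCoeffE_add_mem (γ lam : X) {x : X} (hx : x ∈ M) :
    antipodeCoeffE β ω γ (lam + x) = antipodeCoeffE β ω γ lam := by
  have hshift : lam + x - γ = lam - γ + x := by abel
  calc antipodeCoeffE β ω γ (lam + x)
      = β lam γ * β x γ * (β lam x * ω lam lam) * (β (lam - γ) x * ω (lam - γ) (lam - γ)) := by
        rw [antipodeCoeffE, hshift, hβ_add, hω.diag_add_mem _ hx, hω.diag_add_mem _ hx]
    _ = antipodeCoeffE β ω γ lam * (β lam x * (β x γ * β (lam - γ) x)) := by
        rw [antipodeCoeffE]; ac_rfl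
    _ = antipodeCoeffE β ω γ lam * β lam x ^ 2 := by
        rw [hβ_symm x γ, ← hβ_add, add_sub_cancel, sq]
    _ = antipodeCoeffE β ω γ lam := by rw [hβ_sq lam x hx, mul_one]

theorem antipodeCoeffF_add_mem (γ lam : X) {x : X} (hx : x ∈ M) :
    antipodeCoeffF β ω γ (lam + x) = antipodeCoeffF β ω γ lam := by
  have hshift : lam + x + γ = lam + γ + x := by abel
  calc antipodeCoeffF β ω γ (lam + x)
      = (β lam γ * β x γ)⁻¹ * (β lam x * ω lam lam) *
          (β lam x * β γ x * ω (lam + γ) (lam + γ))⁻¹ := by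
        rw [antipodeCoeffF, hshift, hβ_add, hω.diag_add_mem _ hx, hω.diag_add_mem _ hx, hβ_add]
    _ = antipodeCoeffF β ω γ lam * (β γ x * β x γ)⁻¹ * (β lam x * (β lam x)⁻¹) := by
        simp only [antipodeCoeffF, mul_inv]; ac_rfl
    _ = antipodeCoeffF β ω γ lam * (β γ x ^ 2)⁻¹ := by
        rw [mul_inv_cancel, mul_one, hβ_symm x γ, sq]
    _ = antipodeCoeffF β ω γ lam := by rw [hβ_sq γ x hx, inv_one, mul_one]

end

end IsBalancing

end

theorem antipode_coefficients_M_invariant_general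
    (X : Type*) [AddCommGroup X] (M : AddSubgroup X)
    (β ω : X → X → ℂˣ)
    (hβ1 : ∀ a a' b : X, β (a + a') b = β a b * β a' b)
    (hβsymm : ∀ a b : X, β a b = β b a)
    (hβsq : ∀ a : X, ∀ x ∈ M, (β a x) ^ 2 = 1)
    (ha : ∀ a a' b : X, ω (a + a') b = ω a b * ω a' b)
    (hb : ∀ a b : X, ∀ x ∈ M, ω a (b + x) = β a x * ω a b)
    (hc : ∀ x ∈ M, ∀ b : X, ω x b = 1) :
    ∀ γ lam : X, ∀ x ∈ M,
      (β (lam + x) γ * ω (lam + x) (lam + x) * ω (lam + x - γ) (lam + x - γ)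
          = β lam γ * ω lam lam * ω (lam - γ) (lam - γ)) ∧
      ((β (lam + x) γ)⁻¹ * ω (lam + x) (lam + x) * (ω (lam + x + γ) (lam + x + γ))⁻¹
          = (β lam γ)⁻¹ * ω lam lam * (ω (lam + γ) (lam + γ))⁻¹) := by
  have hω : IsBalancing M β ω := ⟨ha, hb, hc⟩
  intro γ lam x hx
  exact ⟨hω.antipodeCoeffE_add_mem hβ1 hβsymm hβsq γ lam hx,
    hω.antipodeCoeffF_add_mem hβ1 hβsymm hβsq γ lam hx⟩

/-- If `ω` is a balancing function for `(X, M, β)` with `β` symmetric and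
`β(a,x)² = 1` for all `a ∈ X`, `x ∈ M`, then for each fixed `γ ∈ X` the antipode
coefficient functions `g(λ) = β(λ,γ)·ω(λ,λ)·ω(λ−γ,λ−γ)` and
`h(λ) = β(λ,γ)⁻¹·ω(λ,λ)·ω(λ+γ,λ+γ)⁻¹` are constant on `M`-cosets. -/
theorem antipode_coefficients_M_invariant
    (X : Type*) [AddCommGroup X] (M : AddSubgroup X)
    (β ω : X → X → ℂˣ)
    (hβ1 : ∀ a a' b : X, β (a + a') b = β a b * β a' b)
    (hβ2 : ∀ a b b' : X, β a (b + b') = β a b * β a b')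
    (hβsymm : ∀ a b : X, β a b = β b a)
    (hβsq : ∀ a : X, ∀ x ∈ M, (β a x) ^ 2 = 1)
    (ha : ∀ a a' b : X, ω (a + a') b = ω a b * ω a' b)
    (hb : ∀ a b : X, ∀ x ∈ M, ω a (b + x) = β a x * ω a b)
    (hc : ∀ x ∈ M, ∀ b : X, ω x b = 1) :
    ∀ γ lam : X, ∀ x ∈ M,
      (β (lam + x) γ * ω (lam + x) (lam + x) * ω (lam + x - γ) (lam + x - γ)
          = β lam γ * ω lam lam * ω (lam - γ) (lam - γ)) ∧
      ((β (lam + x) γ)⁻¹ * ω (lam + x) (lam + x) * (ω (lam + x + γ) (lam + x + γ))⁻¹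
          = (β lam γ)⁻¹ * ω lam lam * (ω (lam + γ) (lam + γ))⁻¹) :=
  antipode_coefficients_M_invariant_general X M β ω hβ1 hβsymm hβsq ha hb hc
end

section
/- Let l ≥ 1 be an integer and define M = { m ∈ ℤ : for all n ∈ ℤ, l divides 2·m·n } (= { m : l ∣ 2m }). Then the following are equivalent: (i) for all m, m′ ∈ M, 2l divides 2·m·m′; (ii) for all m ∈ M, 2l divides 2·m²; (iii) l is odd or 4 divides l. Consequently the root lattice of PSL₂, with Killing form (mα, nα) = 2mn on X = ℤα, is strongly admissible at a root of unity q of order 2l exactly when 4 ∤ 2l or 8 ∣ 2l, and is inadmissible otherwise. -/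
/-!
Since `2l ∣ 2x ↔ l ∣ x`, everything is about `M = {m | l ∣ 2m}` and the products `m m'`
with `m, m' ∈ M`. If `l` is odd then `M = lℤ`; if `l = 4k` then `M = 2kℤ` and
`(2k)² = 4k · k`; in both cases `l ∣ m m'`. If `l = 2u` with `u` odd, then `u ∈ M` but
`2u ∤ u²`.
-/

theorem forall_dvd_mul_right_iff {α : Type*} [CommMonoid α] (a b : α) :
    (∀ n, a ∣ b * n) ↔ a ∣ b :=
  ⟨fun h => by simpa using h 1, fun h n => h.mul_right n⟩

namespace Int

theorem dvd_mul_of_dvd_two_mul_of_odd_or_four_dvd {l m m' : ℤ} (hl : Odd l ∨ 4 ∣ l)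
    (hm : l ∣ 2 * m) (hm' : l ∣ 2 * m') : l ∣ m * m' := by
  rcases hl with hodd | ⟨k, rfl⟩
  · exact ((isCoprime_two_right.mpr hodd).dvd_of_dvd_mul_left hm).mul_right m'
  · have half_dvd {x : ℤ} (hx : 4 * k ∣ 2 * x) : 2 * k ∣ x :=
      (mul_dvd_mul_iff_left two_ne_zero).mp (by rwa [← mul_assoc])
    calc 4 * k ∣ 2 * k * (2 * k) := ⟨k, by ring⟩
      _ ∣ m * m' := mul_dvd_mul (half_dvd hm) (half_dvd hm')

theorem odd_or_four_dvd_of_forall_dvd_sq {l : ℤ} (h : ∀ m, l ∣ 2 * m → l ∣ m * m) :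
    Odd l ∨ 4 ∣ l := by
  by_contra! hl
  rw [odd_iff] at hl
  obtain ⟨u, rfl⟩ : 2 ∣ l := by omega
  have two_dvd_u : 2 ∣ u :=
    (mul_dvd_mul_iff_left (by omega : u ≠ 0)).mp (by simpa [mul_comm] using h u dvd_rfl)
  omega

theorem odd_or_four_dvd_iff (l : ℤ) :
    (Odd l ∨ 4 ∣ l) ↔ (¬ 4 ∣ 2 * l ∨ 8 ∣ 2 * l) := by
  rw [odd_iff]
  omega

end Int

theorem psl2_admissibility_general (l : ℤ) :
    ({m : ℤ | ∀ n : ℤ, l ∣ 2 * m * n} = {m : ℤ | l ∣ 2 * m}) ∧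
    ((∀ m ∈ {m : ℤ | ∀ n : ℤ, l ∣ 2 * m * n},
        ∀ m' ∈ {m : ℤ | ∀ n : ℤ, l ∣ 2 * m * n}, (2 * l) ∣ 2 * (m * m'))
      ↔ (∀ m ∈ {m : ℤ | ∀ n : ℤ, l ∣ 2 * m * n}, (2 * l) ∣ 2 * (m * m))) ∧
    ((∀ m ∈ {m : ℤ | ∀ n : ℤ, l ∣ 2 * m * n}, (2 * l) ∣ 2 * (m * m))
      ↔ (Odd l ∨ 4 ∣ l)) ∧
    ((∀ m ∈ {m : ℤ | ∀ n : ℤ, l ∣ 2 * m * n},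
        ∀ m' ∈ {m : ℤ | ∀ n : ℤ, l ∣ 2 * m * n}, (2 * l) ∣ 2 * (m * m'))
      ↔ (¬ (4 ∣ 2 * l) ∨ 8 ∣ 2 * l)) := by
  have hM : {m : ℤ | ∀ n : ℤ, l ∣ 2 * m * n} = {m : ℤ | l ∣ 2 * m} :=
    Set.ext fun m => forall_dvd_mul_right_iff l (2 * m)
  simp only [hM, Set.mem_ofPred_eq, mul_dvd_mul_iff_left (two_ne_zero : (2 : ℤ) ≠ 0)]
  have strong_iff :
      (∀ m, l ∣ 2 * m → ∀ m', l ∣ 2 * m' → l ∣ m * m') ↔ (Odd l ∨ 4 ∣ l) :=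
    ⟨fun h => Int.odd_or_four_dvd_of_forall_dvd_sq fun m hm => h m hm m hm,
      fun h _ hm _ hm' => Int.dvd_mul_of_dvd_two_mul_of_odd_or_four_dvd h hm hm'⟩
  have sq_iff : (∀ m, l ∣ 2 * m → l ∣ m * m) ↔ (Odd l ∨ 4 ∣ l) :=
    ⟨Int.odd_or_four_dvd_of_forall_dvd_sq,
      fun h _ hm => Int.dvd_mul_of_dvd_two_mul_of_odd_or_four_dvd h hm hm⟩
  exact ⟨trivial, strong_iff.trans sq_iff.symm, sq_iff,
    strong_iff.trans (Int.odd_or_four_dvd_iff l)⟩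

/-- (Strong) admissibility for `PSL₂`: with `M = {m : ℤ | ∀ n, l ∣ 2mn} = {m | l ∣ 2m}`
(the sublattice `X^M` of the root lattice `X = ℤα` of `PSL₂`, with `(mα, nα) = 2mn`),
the conditions (i) `2l ∣ 2mm'` for all `m, m' ∈ M` (strong admissibility), (ii)
`2l ∣ 2m²` for all `m ∈ M` (admissibility), and (iii) `l` odd or `4 ∣ l` are all
equivalent; i.e. `PSL₂` is strongly admissible at `q` of order `2l` exactly when
`4 ∤ 2l` or `8 ∣ 2l`, and inadmissible otherwise. -/
theorem psl2_admissibility (l : ℤ) (hl : 1 ≤ l) :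
    ({m : ℤ | ∀ n : ℤ, l ∣ 2 * m * n} = {m : ℤ | l ∣ 2 * m}) ∧
    ((∀ m ∈ {m : ℤ | ∀ n : ℤ, l ∣ 2 * m * n},
        ∀ m' ∈ {m : ℤ | ∀ n : ℤ, l ∣ 2 * m * n}, (2 * l) ∣ 2 * (m * m'))
      ↔ (∀ m ∈ {m : ℤ | ∀ n : ℤ, l ∣ 2 * m * n}, (2 * l) ∣ 2 * (m * m))) ∧
    ((∀ m ∈ {m : ℤ | ∀ n : ℤ, l ∣ 2 * m * n}, (2 * l) ∣ 2 * (m * m))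
      ↔ (Odd l ∨ 4 ∣ l)) ∧
    ((∀ m ∈ {m : ℤ | ∀ n : ℤ, l ∣ 2 * m * n},
        ∀ m' ∈ {m : ℤ | ∀ n : ℤ, l ∣ 2 * m * n}, (2 * l) ∣ 2 * (m * m'))
      ↔ (¬ (4 ∣ 2 * l) ∨ 8 ∣ 2 * l)) :=
  psl2_admissibility_general l
end
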